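/- arXiv:math/0612483 — 5 statements merged into one kernel-verified Lean document; each statement's English description precedes it below -/
import Mathlib

section
/- Let A be an L-structure, let F and G be maps from binary relations on A to binary relations on A, and let t be a ternary L-term that is Mal'cev modulo F and G on A. Then for all reflexive admissible binary relations R, S, T on A: T ∩ (R ∘ S) ⊆ F(T) ∘ cl(S⁻ ∪ R) ∘ G(S); that is, whenever T a c and there is b with R a b and S b c, there exist u, v with F(T) a u, cl(S⁻ ∪ R) u v, and G(S) v c. -/
open FirstOrder FirstOrder.Language

/-- A binary relation is admissible if it is preserved by all function symbols. -/
def Admissible (L : FirstOrder.Language) {A : Type*} [L.Structure A]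
    (R : A → A → Prop) : Prop :=
  ∀ ⦃n : ℕ⦄ (f : L.Functions n) (a b : Fin n → A),
    (∀ i, R (a i) (b i)) → R (Structure.funMap f a) (Structure.funMap f b)

/-- `cl L P` is the smallest reflexive admissible relation containing `P`. -/
def cl (L : FirstOrder.Language) {A : Type*} [L.Structure A]
    (P : A → A → Prop) : A → A → Prop :=
  fun a b => ∀ R : A → A → Prop, Reflexive R → Admissible L R →
    (∀ x y, P x y → R x y) → R a b

/-- For a homomorphism `φ : B → A`, `rmap L φ R` is the reflexive admissible
relation on `A` generated by the image of `R` under `φ`. -/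
def rmap (L : FirstOrder.Language) {A B : Type*} [L.Structure A] [L.Structure B]
    (φ : B →[L] A) (R : B → B → Prop) : A → A → Prop :=
  cl L (fun x y => ∃ u v, R u v ∧ φ u = x ∧ φ v = y)

/-- `t` is a Mal'cev term modulo `F` and `G` on `A`. -/
def MalcevModulo (L : FirstOrder.Language) {A : Type*} [L.Structure A]
    (F G : (A → A → Prop) → (A → A → Prop)) (t : L.Term (Fin 3)) : Prop :=
  ∀ R : A → A → Prop, Reflexive R → Admissible L R → ∀ a b, R a b →
    F R a (t.realize ![a, b, b]) ∧ G R (t.realize ![a, a, b]) b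

/-- The operator `K(R, S; U; T)`. -/
def K4 (L : FirstOrder.Language) {A : Type*} [L.Structure A]
    (R S U T : A → A → Prop) : A → A → Prop :=
  fun z w => ∃ (h k : ℕ) (t : L.Term (Fin h ⊕ Fin k))
    (a a' : Fin h → A) (b b' : Fin k → A),
    (∀ i, R (a i) (a' i)) ∧ (∀ j, S (b j) (b' j)) ∧
    z = t.realize (Sum.elim a' b) ∧ w = t.realize (Sum.elim a' b') ∧
    U (t.realize (Sum.elim a b)) (t.realize (Sum.elim a' b)) ∧
    T (t.realize (Sum.elim a b)) (t.realize (Sum.elim a b'))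

/-- The operator `K(R, S; T)`. -/
def K3 (L : FirstOrder.Language) {A : Type*} [L.Structure A]
    (R S T : A → A → Prop) : A → A → Prop :=
  fun z w => ∃ (h k : ℕ) (t : L.Term (Fin h ⊕ Fin k))
    (a a' : Fin h → A) (b b' : Fin k → A),
    (∀ i, R (a i) (a' i)) ∧ (∀ j, S (b j) (b' j)) ∧
    z = t.realize (Sum.elim a' b) ∧ w = t.realize (Sum.elim a' b') ∧
    T (t.realize (Sum.elim a b)) (t.realize (Sum.elim a b'))

lemma admissible_term_pres {L : FirstOrder.Language} {A : Type*} [L.Structure A]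
    {Q : A → A → Prop} (hQa : Admissible L Q) {α : Type*} (u : L.Term α)
    (a b : α → A) (h : ∀ i, Q (a i) (b i)) : Q (u.realize a) (u.realize b) := by
  induction u with
  | var i => exact h i
  | func f ts ih =>
    simp only [Term.realize]
    exact hQa f _ _ fun i => ih i

/-- if `t` is Mal'cev modulo `F` and `G` on `A`, then for all reflexive
admissible `R, S, T`: `T ∩ (R ∘ S) ⊆ F(T) ∘ cl(S⁻ ∪ R) ∘ G(S)`. -/
theorem stmt0 {L : FirstOrder.Language} {A : Type*} [L.Structure A]
    (F G : (A → A → Prop) → (A → A → Prop)) (t : L.Term (Fin 3))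
    (ht : MalcevModulo L F G t)
    (R S T : A → A → Prop)
    (hRr : Reflexive R) (hRa : Admissible L R)
    (hSr : Reflexive S) (hSa : Admissible L S)
    (hTr : Reflexive T) (hTa : Admissible L T) :
    ∀ a c : A, T a c → (∃ b, R a b ∧ S b c) →
      ∃ u v : A, F T a u ∧ cl L (fun x y => S y x ∨ R x y) u v ∧ G S v c := by
  rintro a c hTac ⟨b, hRab, hSbc⟩
  refine ⟨t.realize ![a, c, c], t.realize ![b, b, c], (ht T hTr hTa a c hTac).1, ?_,
    (ht S hSr hSa b c hSbc).2⟩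
  intro Q hQr hQa hQP
  apply admissible_term_pres hQa
  intro i
  fin_cases i
  · exact hQP a b (Or.inr hRab)
  · exact hQP c b (Or.inl hSbc)
  · exact hQr c
end

section
/- Let A be an L-structure, let F and G be maps from binary relations on A to binary relations on A, and let t be a ternary L-term that is Mal'cev modulo F and G on A. Then for all reflexive admissible binary relations S, T on A: T ∩ S ⊆ F(T) ∘ S⁻ ∘ G(T); that is, whenever both T a c and S a c hold, there exist u, v with F(T) a u, S⁻ u v (i.e. S v u), and G(T) v c. -/
open FirstOrder FirstOrder.Language

theorem Admissible.term_preserves {L : FirstOrder.Language} {A : Type*} [L.Structure A]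
    {R : A → A → Prop} (hR : Admissible L R) {α : Type*} (t : L.Term α)
    (x y : α → A) (h : ∀ i, R (x i) (y i)) : R (t.realize x) (t.realize y) := by
  induction t with
  | var i => exact h i
  | func f ts ih => exact hR f _ _ fun i => ih i

/-- if `t` is Mal'cev modulo `F` and `G` on `A`, then for all reflexive
admissible `S, T`: `T ∩ S ⊆ F(T) ∘ S⁻ ∘ G(T)`. -/
theorem stmt1 {L : FirstOrder.Language} {A : Type*} [L.Structure A]
    (F G : (A → A → Prop) → (A → A → Prop)) (t : L.Term (Fin 3))
    (ht : MalcevModulo L F G t)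
    (S T : A → A → Prop)
    (hSr : Reflexive S) (hSa : Admissible L S)
    (hTr : Reflexive T) (hTa : Admissible L T) :
    ∀ a c : A, T a c → S a c →
      ∃ u v : A, F T a u ∧ S v u ∧ G T v c := by
  intro a c hT hS
  obtain ⟨h1, h2⟩ := ht T hTr hTa a c hT
  refine ⟨t.realize ![a, c, c], t.realize ![a, a, c], h1, ?_, h2⟩
  apply Admissible.term_preserves hSa
  intro i
  fin_cases i <;> simp [hSr a, hSr c, hS]
end

section
/- Let V be a class of L-structures, let X be an L-structure, and let x, y ∈ X be such that for every A in V and all a, b ∈ A there exists an L-homomorphism φ : X → A with φ x = a and φ y = b. Suppose F assigns to each L-structure C (among X and the members of V) a map F_C from reflexive admissible binary relations on C to binary relations on C, such that: (monotonicity) for every A in V, if R ⊆ R' are reflexive admissible relations on A then F_A(R) ⊆ F_A(R'); and (homomorphism property) for every A in V, every L-homomorphism φ : X → A, and every reflexive admissible relation R on X, φ(F_X(R)) ⊆ F_A(φ(R)). Let S = cl({(x,y)}) on X. If F_X(S) relates x to y, then for every A in V and every reflexive admissible relation R on A, R ⊆ F_A(R). -/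
open FirstOrder FirstOrder.Language

lemma cl_refl (L : FirstOrder.Language) {A : Type*} [L.Structure A]
    (P : A → A → Prop) : Reflexive (cl L P) :=
  fun a R hR _ _ => hR a

lemma cl_adm (L : FirstOrder.Language) {A : Type*} [L.Structure A]
    (P : A → A → Prop) : Admissible L (cl L P) :=
  fun _ f a b h R hR hA hP => hA f a b (fun i => h i R hR hA hP)

/-- neutrality transfers from the free algebra to the whole class. -/
theorem stmt2 {L : FirstOrder.Language} {ι : Type*} (A : ι → Type*)
    [∀ i, L.Structure (A i)]
    (X : Type*) [L.Structure X] (x y : X)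
    (hfree : ∀ i : ι, ∀ a b : A i, ∃ φ : X →[L] A i, φ x = a ∧ φ y = b)
    (FX : (X → X → Prop) → (X → X → Prop))
    (FA : ∀ i : ι, (A i → A i → Prop) → (A i → A i → Prop))
    (mono : ∀ i : ι, ∀ R R' : A i → A i → Prop,
      Reflexive R → Admissible L R → Reflexive R' → Admissible L R' →
      (∀ a b, R a b → R' a b) → ∀ a b, FA i R a b → FA i R' a b)
    (homprop : ∀ i : ι, ∀ φ : X →[L] A i, ∀ R : X → X → Prop,
      Reflexive R → Admissible L R →
      ∀ a b, rmap L φ (FX R) a b → FA i (rmap L φ R) a b)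
    (hxy : FX (cl L (fun u v => u = x ∧ v = y)) x y) :
    ∀ i : ι, ∀ R : A i → A i → Prop, Reflexive R → Admissible L R →
      ∀ a b, R a b → FA i R a b := by
  intro i R hRr hRa a b hab
  obtain ⟨φ, hx, hy⟩ := hfree i a b
  set S : X → X → Prop := cl L (fun u v => u = x ∧ v = y) with hS
  have h1 : rmap L φ (FX S) a b := by
    intro T hTr hTa hT
    exact hT a b ⟨x, y, hxy, hx, hy⟩
  have h2 : FA i (rmap L φ S) a b := homprop i φ S (cl_refl L _) (cl_adm L _) a b h1
  refine mono i _ R (cl_refl L _) (cl_adm L _) hRr hRa ?_ a b h2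
  intro c d hcd
  apply hcd R hRr hRa
  rintro _ _ ⟨u, v, huv, rfl, rfl⟩
  have : Admissible L (fun u v => R (φ u) (φ v)) := by
    intro n f p q h
    rw [φ.map_fun, φ.map_fun]
    exact hRa f _ _ h
  exact huv (fun u v => R (φ u) (φ v)) (fun u => hRr _) this
    (by
      rintro u v ⟨rfl, rfl⟩
      exact hx ▸ hy ▸ hab)
end

section
/- For every L-homomorphism φ : B → A between L-structures and all reflexive admissible binary relations R, S, U, T on B, one has φ(K(R,S;U;T)) ⊆ K(φ(R), φ(S); φ(U); φ(T)); that is, the reflexive admissible relation on A generated by the image under φ of K(R,S;U;T) (computed in B) is contained in K(φ(R), φ(S); φ(U); φ(T)) (computed in A). -/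
open FirstOrder FirstOrder.Language

section MyAux

variable {L : FirstOrder.Language} {A B : Type*} [L.Structure A] [L.Structure B]

lemma my_cl_refl (P : A → A → Prop) : Reflexive (cl L P) :=
  fun a R hr _ _ => hr a

lemma my_cl_adm (P : A → A → Prop) : Admissible L (cl L P) := by
  intro n f a b h R hr ha hc
  exact ha f a b (fun i => h i R hr ha hc)

lemma my_cl_le (P : A → A → Prop) {x y : A} (h : P x y) : cl L P x y :=
  fun _ _ _ hc => hc x y h

lemma my_K4_of_witness (R S U T : A → A → Prop)
    (α β : Type) [Fintype α] [Fintype β] (t : L.Term (α ⊕ β))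
    (a a' : α → A) (b b' : β → A)
    (hR : ∀ i, R (a i) (a' i)) (hS : ∀ j, S (b j) (b' j))
    (hU : U (t.realize (Sum.elim a b)) (t.realize (Sum.elim a' b)))
    (hT : T (t.realize (Sum.elim a b)) (t.realize (Sum.elim a b'))) :
    K4 L R S U T (t.realize (Sum.elim a' b)) (t.realize (Sum.elim a' b')) := by
  classical
  let eα := Fintype.equivFin α
  let eβ := Fintype.equivFin β
  let t' : L.Term (Fin (Fintype.card α) ⊕ Fin (Fintype.card β)) :=
    t.relabel (Sum.map eα eβ)
  have key : ∀ (c : α → A) (d : β → A),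
      t'.realize (Sum.elim (c ∘ eα.symm) (d ∘ eβ.symm)) = t.realize (Sum.elim c d) := by
    intro c d
    rw [Term.realize_relabel]
    congr 1
    funext x
    cases x with
    | inl x => simp
    | inr y => simp
  refine ⟨Fintype.card α, Fintype.card β, t', a ∘ eα.symm, a' ∘ eα.symm,
    b ∘ eβ.symm, b' ∘ eβ.symm, fun i => hR _, fun j => hS _, ?_, ?_, ?_, ?_⟩
  · rw [key]
  · rw [key]
  · rw [key, key]; exact hU
  · rw [key, key]; exact hT

lemma my_K4_refl (R S U T : A → A → Prop)
    (hR : Reflexive R) (hU : Reflexive U) (hT : Reflexive T) :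
    Reflexive (K4 L R S U T) := by
  intro x
  exact ⟨1, 0, Term.var (Sum.inl 0), fun _ => x, fun _ => x, finZeroElim, finZeroElim,
    fun _ => hR x, fun j => j.elim0, rfl, rfl, hU x, hT x⟩

lemma my_K4_adm (R S U T : A → A → Prop)
    (hUa : Admissible L U) (hTa : Admissible L T) :
    Admissible L (K4 L R S U T) := by
  intro n f z w hzw
  choose h k t a a' b b' hR hS hz hw hU hT using hzw
  classical
  let α := Σ i : Fin n, Fin (h i)
  let β := Σ i : Fin n, Fin (k i)
  let inj : ∀ i : Fin n, (Fin (h i) ⊕ Fin (k i)) → (α ⊕ β) := fun i =>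
    Sum.map (fun x => ⟨i, x⟩) (fun y => ⟨i, y⟩)
  let tt : L.Term (α ⊕ β) := Term.func f (fun i => (t i).relabel (inj i))
  have key : ∀ (ca : ∀ i, Fin (h i) → A) (cb : ∀ i, Fin (k i) → A),
      tt.realize (Sum.elim (fun p : α => ca p.1 p.2) (fun p : β => cb p.1 p.2))
        = Structure.funMap f (fun i => (t i).realize (Sum.elim (ca i) (cb i))) := by
    intro ca cb
    show Structure.funMap f _ = _
    congr 1
    funext i
    rw [Term.realize_relabel]
    congr 1
    funext x
    cases x with
    | inl x => rfl
    | inr y => rfl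
  have main := my_K4_of_witness R S U T α β tt
    (fun p : α => a p.1 p.2) (fun p : α => a' p.1 p.2)
    (fun p : β => b p.1 p.2) (fun p : β => b' p.1 p.2)
    (fun p => hR p.1 p.2) (fun p => hS p.1 p.2) ?_ ?_
  · rw [key, key] at main
    have hz' : Structure.funMap f z
        = Structure.funMap f (fun i => (t i).realize (Sum.elim (a' i) (b i))) := by
      congr 1; funext i; exact hz i
    have hw' : Structure.funMap f w
        = Structure.funMap f (fun i => (t i).realize (Sum.elim (a' i) (b' i))) := by
      congr 1; funext i; exact hw i
    rw [hz', hw']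
    exact main
  · rw [key, key]
    exact hUa f _ _ (fun i => hU i)
  · rw [key, key]
    exact hTa f _ _ (fun i => hT i)

lemma my_image_K4 (φ : B →[L] A) (R S U T : B → B → Prop) {x y : A}
    (hxy : ∃ u v, K4 L R S U T u v ∧ φ u = x ∧ φ v = y) :
    K4 L (rmap L φ R) (rmap L φ S) (rmap L φ U) (rmap L φ T) x y := by
  obtain ⟨u, v, ⟨h, k, t, a, a', b, b', hR, hS, hz, hw, hU, hT⟩, rfl, rfl⟩ := hxy
  have key : ∀ (c : Fin h → B) (d : Fin k → B),
      t.realize (Sum.elim (φ ∘ c) (φ ∘ d)) = φ (t.realize (Sum.elim c d)) := by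
    intro c d
    rw [← Sum.comp_elim, HomClass.realize_term φ]
  refine ⟨h, k, t, φ ∘ a, φ ∘ a', φ ∘ b, φ ∘ b', ?_, ?_, ?_, ?_, ?_, ?_⟩
  · exact fun i => my_cl_le _ ⟨a i, a' i, hR i, rfl, rfl⟩
  · exact fun j => my_cl_le _ ⟨b j, b' j, hS j, rfl, rfl⟩
  · rw [key, hz]
  · rw [key, hw]
  · rw [key, key]
    exact my_cl_le _ ⟨_, _, hU, rfl, rfl⟩
  · rw [key, key]
    exact my_cl_le _ ⟨_, _, hT, rfl, rfl⟩

end MyAux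

/-- `K(R,S;U;T)` satisfies the homomorphism property. -/
theorem stmt4 {L : FirstOrder.Language} {A B : Type*} [L.Structure A] [L.Structure B]
    (φ : B →[L] A) (R S U T : B → B → Prop)
    (hRr : Reflexive R) (hRa : Admissible L R)
    (hSr : Reflexive S) (hSa : Admissible L S)
    (hUr : Reflexive U) (hUa : Admissible L U)
    (hTr : Reflexive T) (hTa : Admissible L T) :
    ∀ a b : A, rmap L φ (K4 L R S U T) a b →
      K4 L (rmap L φ R) (rmap L φ S) (rmap L φ U) (rmap L φ T) a b := by
  intro a b hab
  exact hab _ (my_K4_refl _ _ _ _ (my_cl_refl _) (my_cl_refl _) (my_cl_refl _))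
    (my_K4_adm _ _ _ _ (my_cl_adm _) (my_cl_adm _))
    (fun x y hxy => my_image_K4 φ R S U T hxy)
end

section
/- For every L-homomorphism φ : B → A between L-structures and all reflexive admissible binary relations R, S on B, one has φ((K(R,S;Eq))*) ⊆ (K(φ(R), φ(S); Eq))*, where Eq denotes the equality relation (on B on the left-hand side and on A on the right-hand side) and * denotes transitive closure; that is, the operator (R,S) ↦ (K(R,S;0))* satisfies the homomorphism property. -/
open FirstOrder FirstOrder.Language

section Aux

variable {L : FirstOrder.Language} {A B : Type*} [L.Structure A] [L.Structure B]

lemma rmap_refl (φ : B →[L] A) (R : B → B → Prop) : Reflexive (rmap L φ R) :=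
  fun a R' hR' _ _ => hR' a

lemma rmap_of (φ : B →[L] A) {R : B → B → Prop} {u v : B} (h : R u v) :
    rmap L φ R (φ u) (φ v) :=
  fun _R' _ _ hP => hP _ _ ⟨u, v, h, rfl, rfl⟩

open FirstOrder.Language Structure in
/-- Single-coordinate step: `K3` with `Eq` is preserved by updating one
coordinate of a function application, provided `R` is reflexive. -/
lemma k3_update {R S : A → A → Prop} (hRr : Reflexive R)
    {n : ℕ} (f : L.Functions n) (c : Fin n → A) (i : Fin n) {x y : A}
    (hxy : K3 L R S Eq x y) :
    K3 L R S Eq (funMap f (Function.update c i x)) (funMap f (Function.update c i y)) := by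
  obtain ⟨h, k, t, a, a', b, b', hR, hS, hz, hw, hT⟩ := hxy
  refine ⟨h + n, k,
    Term.func f (fun j => if j = i then t.relabel (Sum.map (Fin.castAdd n) id)
      else Term.var (Sum.inl (Fin.natAdd h j))),
    Fin.append a c, Fin.append a' c, b, b', ?_, hS, ?_, ?_, ?_⟩
  · intro j
    refine Fin.addCases (fun j => ?_) (fun j => ?_) j
    · simpa [Fin.append_left] using hR j
    · simpa [Fin.append_right] using hRr _
  all_goals {
    simp only [Term.realize, Term.realize_relabel]
    have key : ∀ (u : Fin h → A) (v : Fin k → A),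
        (Sum.elim (Fin.append u c) v) ∘ Sum.map (Fin.castAdd n) id = Sum.elim u v := by
      intro u v
      funext s
      cases s <;> simp [Fin.append_left]
    first
      | (rw [hz]; congr 1; funext j;
         by_cases hj : j = i <;>
           simp [hj, key, Fin.append_right, Function.update_apply])
      | (rw [hw]; congr 1; funext j;
         by_cases hj : j = i <;>
           simp [hj, key, Fin.append_right, Function.update_apply])
      | (congr 1; funext j;
         by_cases hj : j = i <;>
           simp [hj, key, Fin.append_right, hT])
  }

/-- Mapping a `K3` witness through a homomorphism. -/
lemma k3_map (φ : B →[L] A) {R S : B → B → Prop} {u v : B}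
    (huv : K3 L R S Eq u v) :
    K3 L (rmap L φ R) (rmap L φ S) Eq (φ u) (φ v) := by
  obtain ⟨h, k, t, a, a', b, b', hR, hS, hz, hw, hT⟩ := huv
  refine ⟨h, k, t, φ ∘ a, φ ∘ a', φ ∘ b, φ ∘ b',
    fun i => rmap_of φ (hR i), fun j => rmap_of φ (hS j), ?_, ?_, ?_⟩
  · rw [← Sum.comp_elim, HomClass.realize_term]; exact congrArg φ hz
  · rw [← Sum.comp_elim, HomClass.realize_term]; exact congrArg φ hw
  · rw [← Sum.comp_elim, ← Sum.comp_elim, HomClass.realize_term, HomClass.realize_term]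
    exact congrArg φ hT

end Aux

/-- `(R,S) ↦ (K(R,S;0))*` satisfies the homomorphism property. -/
theorem stmt13 {L : FirstOrder.Language} {A B : Type*} [L.Structure A] [L.Structure B]
    (φ : B →[L] A) (R S : B → B → Prop)
    (hRr : Reflexive R) (hRa : Admissible L R)
    (hSr : Reflexive S) (hSa : Admissible L S) :
    ∀ a b : A, rmap L φ (Relation.TransGen (K3 L R S Eq)) a b →
      Relation.TransGen (K3 L (rmap L φ R) (rmap L φ S) Eq) a b := by
  
  -- It suffices to show the target relation is reflexive, admissible, and
  -- contains the image of `TransGen (K3 L R S Eq)` under `φ`.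
  set T : A → A → Prop := Relation.TransGen (K3 L (rmap L φ R) (rmap L φ S) Eq) with hT
  have hrefl : Reflexive T := by
    intro x
    refine Relation.TransGen.single ?_
    exact ⟨1, 0, Term.var (Sum.inl 0), (fun _ => x), (fun _ => x), Fin.elim0, Fin.elim0,
      fun i => rmap_refl φ R x, fun j => j.elim0, rfl, rfl, rfl⟩
  have hupd : ∀ {n : ℕ} (f : L.Functions n) (c : Fin n → A) (i : Fin n) {x y : A},
      T x y → T (Structure.funMap f (Function.update c i x))
        (Structure.funMap f (Function.update c i y)) := by
    intro n f c i x y hxy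
    induction hxy with
    | single h => exact Relation.TransGen.single (k3_update (rmap_refl φ R) f c i h)
    | tail _ h ih => exact ih.tail (k3_update (rmap_refl φ R) f c i h)
  have hadm : Admissible L T := by
    intro n f a b hab
    have key : ∀ s : Finset (Fin n),
        T (Structure.funMap f a) (Structure.funMap f (fun j => if j ∈ s then b j else a j)) := by
      intro s
      induction s using Finset.induction with
      | empty => simpa using hrefl (Structure.funMap f a)
      | @insert i s hi ih =>
        refine Relation.TransGen.trans ih ?_
        have h1 : (fun j => if j ∈ insert i s then b j else a j) =
            Function.update (fun j => if j ∈ s then b j else a j) i (b i) := by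
          funext j
          by_cases hj : j = i <;> simp [hj, Function.update_apply]
        have h2 : (fun j => if j ∈ s then b j else a j) =
            Function.update (fun j => if j ∈ s then b j else a j) i (a i) := by
          funext j
          by_cases hj : j = i <;> simp [hj, hi, Function.update_apply]
        rw [h1]
        nth_rewrite 1 [h2]
        exact hupd f _ i (hab i)
    have := key Finset.univ
    simpa using this
  have hcont : ∀ x y, (∃ u v, Relation.TransGen (K3 L R S Eq) u v ∧ φ u = x ∧ φ v = y) →
      T x y := by
    rintro x y ⟨u, v, huv, rfl, rfl⟩
    induction huv with
    | single h => exact Relation.TransGen.single (k3_map φ h)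
    | tail _ h ih => exact ih.tail (k3_map φ h)
  intro a b hab
  exact hab T hrefl hadm hcont
end
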